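/- arXiv:2306.05353 — 4 statements merged into one kernel-verified Lean document; each statement's English description precedes it below -/
import Mathlib

section
/- Let S and U be nonempty finite types, let P be a transition kernel on S with actions U, let r be a reward function, let 0 ≤ γ < 1 and α > 0. Then the soft Bellman optimality operator Γ* is a γ-contraction in the sup norm, i.e. ‖Γ* Q − Γ* Q'‖∞ ≤ γ·‖Q − Q'‖∞ for all Q, Q' : S → U → ℝ; consequently Γ* has a unique fixed point Q*, and for every initial Q⁰ the iterates Q^{k+1} = Γ* Q^k converge to Q* in sup norm as k → ∞. -/
open Filter Topology

/-- The soft Bellman optimality operator. -/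
noncomputable def softBellmanOpt {S U : Type*} [Fintype S] [Fintype U]
    (P : S → U → S → ℝ) (r : S → U → ℝ) (γ α : ℝ)
    (Q : S → U → ℝ) : S → U → ℝ :=
  fun s u => r s u +
    γ * ∑ s', P s u s' * (α * Real.log (∑ u', Real.exp (Q s' u' / α)))

/-- The sup norm `‖Q‖∞ = max_{s,u} |Q s u|`. -/
noncomputable def supNorm {S U : Type*} [Fintype S] [Fintype U] [Nonempty S] [Nonempty U]
    (Q : S → U → ℝ) : ℝ :=
  Finset.univ.sup' Finset.univ_nonempty (fun p : S × U => |Q p.1 p.2|)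

lemma lse_diff_le {U : Type*} [Fintype U] [Nonempty U] {α : ℝ} (hα : 0 < α)
    (f g : U → ℝ) (M : ℝ) (hM : ∀ u, f u - g u ≤ M) :
    α * Real.log (∑ u, Real.exp (f u / α)) - α * Real.log (∑ u, Real.exp (g u / α)) ≤ M := by
  have hposf : 0 < ∑ u, Real.exp (f u / α) :=
    Finset.sum_pos (fun u _ => Real.exp_pos _) Finset.univ_nonempty
  have hposg : 0 < ∑ u, Real.exp (g u / α) :=
    Finset.sum_pos (fun u _ => Real.exp_pos _) Finset.univ_nonempty
  have h1 : ∑ u, Real.exp (f u / α) ≤ Real.exp (M / α) * ∑ u, Real.exp (g u / α) := by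
    rw [Finset.mul_sum]
    refine Finset.sum_le_sum fun u _ => ?_
    rw [← Real.exp_add, ← add_div]
    apply Real.exp_le_exp.2
    have := hM u
    gcongr
    linarith
  have h2 : Real.log (∑ u, Real.exp (f u / α)) ≤ M / α + Real.log (∑ u, Real.exp (g u / α)) := by
    calc Real.log (∑ u, Real.exp (f u / α))
        ≤ Real.log (Real.exp (M / α) * ∑ u, Real.exp (g u / α)) := Real.log_le_log hposf h1
      _ = M / α + Real.log (∑ u, Real.exp (g u / α)) := by
          rw [Real.log_mul (Real.exp_ne_zero _) (ne_of_gt hposg), Real.log_exp]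
  have h3 := mul_le_mul_of_nonneg_left h2 hα.le
  rw [mul_add, mul_div_cancel₀ _ hα.ne'] at h3
  linarith

lemma lse_abs_diff_le {U : Type*} [Fintype U] [Nonempty U] {α : ℝ} (hα : 0 < α)
    (f g : U → ℝ) (M : ℝ) (hM : ∀ u, |f u - g u| ≤ M) :
    |α * Real.log (∑ u, Real.exp (f u / α)) - α * Real.log (∑ u, Real.exp (g u / α))| ≤ M := by
  rw [abs_le]
  constructor
  · have := lse_diff_le hα g f M (fun u => by have := abs_le.1 (hM u); linarith)
    linarith
  · exact lse_diff_le hα f g M (fun u => (abs_le.1 (hM u)).2)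

lemma supNorm_nonneg {S U : Type*} [Fintype S] [Fintype U] [Nonempty S] [Nonempty U]
    (Q : S → U → ℝ) : 0 ≤ supNorm Q := by
  obtain ⟨p⟩ : Nonempty (S × U) := inferInstance
  have h : |Q p.1 p.2| ≤ supNorm Q :=
    Finset.le_sup' (fun q : S × U => |Q q.1 q.2|) (Finset.mem_univ p)
  exact le_trans (abs_nonneg _) h

lemma abs_le_supNorm {S U : Type*} [Fintype S] [Fintype U] [Nonempty S] [Nonempty U]
    (Q : S → U → ℝ) (s : S) (u : U) : |Q s u| ≤ supNorm Q :=
  Finset.le_sup' (fun p : S × U => |Q p.1 p.2|) (Finset.mem_univ (s, u))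

lemma contraction_key {S U : Type*} [Fintype S] [Fintype U] [Nonempty S] [Nonempty U]
    (P : S → U → S → ℝ) (hP0 : ∀ s u s', 0 ≤ P s u s')
    (hP1 : ∀ s u, ∑ s', P s u s' = 1)
    (r : S → U → ℝ) (γ α : ℝ) (hγ0 : 0 ≤ γ) (hα : 0 < α)
    (Q Q' : S → U → ℝ) :
    supNorm (fun s u => softBellmanOpt P r γ α Q s u - softBellmanOpt P r γ α Q' s u)
      ≤ γ * supNorm (fun s u => Q s u - Q' s u) := by
  set M := supNorm (fun s u => Q s u - Q' s u) with hMdef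
  apply Finset.sup'_le
  rintro ⟨s, u⟩ -
  simp only [softBellmanOpt]
  have key : ∀ s' : S,
      |α * Real.log (∑ u', Real.exp (Q s' u' / α)) -
        α * Real.log (∑ u', Real.exp (Q' s' u' / α))| ≤ M :=
    fun s' => lse_abs_diff_le hα _ _ M (fun u' => abs_le_supNorm (fun s u => Q s u - Q' s u) s' u')
  have : r s u + γ * ∑ s', P s u s' * (α * Real.log (∑ u', Real.exp (Q s' u' / α)))
      - (r s u + γ * ∑ s', P s u s' * (α * Real.log (∑ u', Real.exp (Q' s' u' / α))))
      = γ * ∑ s', P s u s' * (α * Real.log (∑ u', Real.exp (Q s' u' / α))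
          - α * Real.log (∑ u', Real.exp (Q' s' u' / α))) := by
    rw [Finset.mul_sum, Finset.mul_sum, Finset.mul_sum, add_sub_add_left_eq_sub,
      ← Finset.sum_sub_distrib]
    exact Finset.sum_congr rfl fun s' _ => by ring
  rw [this, abs_mul, abs_of_nonneg hγ0]
  have hsum : |∑ s', P s u s' * (α * Real.log (∑ u', Real.exp (Q s' u' / α))
      - α * Real.log (∑ u', Real.exp (Q' s' u' / α)))| ≤ M := by
    calc |∑ s', P s u s' * (α * Real.log (∑ u', Real.exp (Q s' u' / α))
          - α * Real.log (∑ u', Real.exp (Q' s' u' / α)))|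
        ≤ ∑ s', |P s u s' * (α * Real.log (∑ u', Real.exp (Q s' u' / α))
          - α * Real.log (∑ u', Real.exp (Q' s' u' / α)))| := Finset.abs_sum_le_sum_abs _ _
      _ ≤ ∑ s', P s u s' * M := by
          refine Finset.sum_le_sum fun s' _ => ?_
          rw [abs_mul, abs_of_nonneg (hP0 s u s')]
          exact mul_le_mul_of_nonneg_left (key s') (hP0 s u s')
      _ = M := by rw [← Finset.sum_mul, hP1, one_mul]
  exact mul_le_mul_of_nonneg_left hsum hγ0

lemma dist_eq_supNorm {S U : Type*} [Fintype S] [Fintype U] [Nonempty S] [Nonempty U]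
    (f g : S → U → ℝ) : dist f g = supNorm (fun s u => f s u - g s u) := by
  apply le_antisymm
  · rw [dist_pi_le_iff (supNorm_nonneg _)]
    intro s
    rw [dist_pi_le_iff (supNorm_nonneg _)]
    intro u
    rw [Real.dist_eq]
    exact abs_le_supNorm (fun s u => f s u - g s u) s u
  · apply Finset.sup'_le
    rintro ⟨s, u⟩ -
    calc |f s u - g s u| = dist (f s u) (g s u) := (Real.dist_eq _ _).symm
      _ ≤ dist (f s) (g s) := dist_le_pi_dist _ _ u
      _ ≤ dist f g := dist_le_pi_dist f g s

theorem soft_bellman_opt_contraction_unique_fixed_point_convergence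
    {S U : Type*} [Fintype S] [Fintype U] [Nonempty S] [Nonempty U]
    (P : S → U → S → ℝ) (hP0 : ∀ s u s', 0 ≤ P s u s')
    (hP1 : ∀ s u, ∑ s', P s u s' = 1)
    (r : S → U → ℝ) (γ α : ℝ) (hγ0 : 0 ≤ γ) (hγ1 : γ < 1) (hα : 0 < α) :
    (∀ Q Q' : S → U → ℝ,
        supNorm (fun s u => softBellmanOpt P r γ α Q s u - softBellmanOpt P r γ α Q' s u)
          ≤ γ * supNorm (fun s u => Q s u - Q' s u)) ∧
    ∃ Qstar : S → U → ℝ, softBellmanOpt P r γ α Qstar = Qstar ∧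
      (∀ Q' : S → U → ℝ, softBellmanOpt P r γ α Q' = Q' → Q' = Qstar) ∧
      (∀ Q0 : S → U → ℝ,
        Tendsto (fun k => supNorm (fun s u => ((softBellmanOpt P r γ α)^[k] Q0) s u - Qstar s u))
          atTop (𝓝 0)) := by
  set T := softBellmanOpt P r γ α with hT
  have hcontr := contraction_key P hP0 hP1 r γ α hγ0 hα
  refine ⟨hcontr, ?_⟩
  have hLip : LipschitzWith ⟨γ, hγ0⟩ T := by
    apply LipschitzWith.of_dist_le_mul
    intro Q Q'
    rw [dist_eq_supNorm, dist_eq_supNorm]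
    exact hcontr Q Q'
  have hC : ContractingWith ⟨γ, hγ0⟩ T := ⟨by exact_mod_cast hγ1, hLip⟩
  refine ⟨hC.fixedPoint T, hC.fixedPoint_isFixedPt, ?_, ?_⟩
  · intro Q' hQ'
    exact hC.fixedPoint_unique hQ'
  · intro Q0
    have h := hC.tendsto_iterate_fixedPoint Q0
    have h2 := (tendsto_iff_dist_tendsto_zero).1 h
    convert h2 using 2 with k
    rw [dist_eq_supNorm]
end

section
/- Let U be a nonempty finite type, α > 0, and Q, Q' : U → ℝ. Then |α·log(∑_{u} exp(Q u/α)) − α·log(∑_{u} exp(Q' u/α))| ≤ max_{u} |Q u − Q' u|. (Non-expansiveness of the soft maximum, the key estimate in the contraction proofs for the soft Bellman operators.) -/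
/-!
Shifting every exponent by at most `M` multiplies `∑ exp` by at most `exp M`, so log-sum-exp
moves by at most `M`: it is 1-Lipschitz for the sup norm. The soft maximum at temperature `α`
is log-sum-exp conjugated by scaling by `α`, which preserves this bound.
-/

open Real Finset

theorem log_sum_exp_le_add {ι : Type*} {s : Finset ι} (hs : s.Nonempty) {f g : ι → ℝ} {M : ℝ}
    (h : ∀ i ∈ s, f i ≤ g i + M) :
    log (∑ i ∈ s, exp (f i)) ≤ log (∑ i ∈ s, exp (g i)) + M := by
  have hpos : 0 < ∑ i ∈ s, exp (g i) := sum_pos (fun i _ => exp_pos _) hs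
  have hsum : ∑ i ∈ s, exp (f i) ≤ exp M * ∑ i ∈ s, exp (g i) := by
    rw [mul_sum]
    refine sum_le_sum fun i hi => ?_
    rw [← exp_add, exp_le_exp]
    linarith [h i hi]
  calc log (∑ i ∈ s, exp (f i))
      ≤ log (exp M * ∑ i ∈ s, exp (g i)) := log_le_log (sum_pos (fun i _ => exp_pos _) hs) hsum
    _ = log (∑ i ∈ s, exp (g i)) + M := by
      rw [log_mul (exp_ne_zero M) hpos.ne', log_exp, add_comm]

theorem abs_log_sum_exp_sub_le {ι : Type*} {s : Finset ι} (hs : s.Nonempty) {f g : ι → ℝ}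
    {M : ℝ} (h : ∀ i ∈ s, |f i - g i| ≤ M) :
    |log (∑ i ∈ s, exp (f i)) - log (∑ i ∈ s, exp (g i))| ≤ M := by
  have hfg := log_sum_exp_le_add hs (f := f) (g := g) (M := M) fun i hi => by
    linarith [(abs_le.mp (h i hi)).2]
  have hgf := log_sum_exp_le_add hs (f := g) (g := f) (M := M) fun i hi => by
    linarith [(abs_le.mp (h i hi)).1]
  rw [abs_sub_le_iff]
  constructor <;> linarith

theorem softmax_nonexpansive
    {U : Type*} [Fintype U] [Nonempty U]
    (α : ℝ) (hα : 0 < α) (Q Q' : U → ℝ) :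
    |α * Real.log (∑ u, Real.exp (Q u / α)) - α * Real.log (∑ u, Real.exp (Q' u / α))|
      ≤ Finset.univ.sup' Finset.univ_nonempty (fun u => |Q u - Q' u|) := by
  set M := univ.sup' univ_nonempty (fun u => |Q u - Q' u|)
  have hscaled : ∀ u ∈ univ, |Q u / α - Q' u / α| ≤ M / α := fun u hu => by
    rw [← sub_div, abs_div, abs_of_pos hα]
    exact div_le_div_of_nonneg_right (le_sup' (fun u => |Q u - Q' u|) hu) hα.le
  calc |α * log (∑ u, exp (Q u / α)) - α * log (∑ u, exp (Q' u / α))|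
      = α * |log (∑ u, exp (Q u / α)) - log (∑ u, exp (Q' u / α))| := by
        rw [← mul_sub, abs_mul, abs_of_pos hα]
    _ ≤ α * (M / α) := by gcongr; exact abs_log_sum_exp_sub_le univ_nonempty hscaled
    _ = M := mul_div_cancel₀ M hα.ne'
end

section
/- Let S and U be nonempty finite types, let P be a transition kernel on S with actions U, let r be a reward function, let 0 ≤ γ < 1 and α > 0. Let π be a policy and let Q₁ satisfy Q₁ = Γ_π Q₁. Define the improved policy π'(s,u) = exp(Q₁ s u/α)/∑_{u'} exp(Q₁ s u'/α) (the Boltzmann policy of Q₁, which is the agreement reached by strictly nested Stein variational negotiation), and let Q₂ satisfy Q₂ = Γ_{π'} Q₂. Then Q₂ s u ≥ Q₁ s u for all s ∈ S and u ∈ U. (Paper's Lemma 6.2, Policy Improvement.) -/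
/-!
Write `B = B(Q₁)` and `Z s = ∑ᵤ exp (Q₁ s u / α)`. Since `α log B(s,u) = Q₁ s u - α log Z s`,
the soft value `∑ᵤ p u (Q₁ s u - α log p u)` of a distribution `p` equals
`α log Z s - α KL(p ‖ B(s,·))`, so by Gibbs' inequality it is maximised by `p = B(s,·)`. Hence
`Q₁ = Γ_π Q₁ ≤ Γ_B Q₁`. At a maximiser of `M = max (Q₁ - Q₂)` this gives
`M ≤ (Γ_B Q₁ - Γ_B Q₂)(s,u) ≤ γ M`, as `Γ_B` averages `Q₁ - Q₂` and scales by `γ`; so `M ≤ 0`.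
-/

/-- The soft Bellman operator of a policy `π`. -/
noncomputable def softBellman {S U : Type*} [Fintype S] [Fintype U]
    (P : S → U → S → ℝ) (r : S → U → ℝ) (γ α : ℝ) (π : S → U → ℝ)
    (Q : S → U → ℝ) : S → U → ℝ :=
  fun s u => r s u +
    γ * ∑ s', P s u s' * ∑ u', π s' u' * (Q s' u' - α * Real.log (π s' u'))

open Finset
open Real (exp exp_pos exp_ne_zero log log_div log_exp log_le_sub_one_of_pos)

lemma mul_log_le_mul_log_add_sub {p q : ℝ} (hp : 0 ≤ p) (hq : 0 < q) :
    p * log q ≤ p * log p + (q - p) := by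
  rcases hp.eq_or_lt with rfl | hp
  · simpa using hq.le
  · have hlog := log_le_sub_one_of_pos (div_pos hq hp)
    rw [log_div hq.ne' hp.ne'] at hlog
    have hscale : p * (q / p - 1) = q - p := by field_simp
    nlinarith [mul_le_mul_of_nonneg_left hlog hp.le]

/-- Gibbs' inequality. -/
theorem sum_mul_log_le_sum_mul_log {ι : Type*} [Fintype ι] {p q : ι → ℝ}
    (hp : ∀ i, 0 ≤ p i) (hq : ∀ i, 0 < q i) (hpq : ∑ i, p i = ∑ i, q i) :
    ∑ i, p i * log (q i) ≤ ∑ i, p i * log (p i) :=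
  calc ∑ i, p i * log (q i) ≤ ∑ i, (p i * log (p i) + (q i - p i)) :=
        sum_le_sum fun i _ => mul_log_le_mul_log_add_sub (hp i) (hq i)
    _ = ∑ i, p i * log (p i) := by
        rw [sum_add_distrib, sum_sub_distrib, hpq, sub_self, add_zero]

lemma sum_mul_le_of_le {ι : Type*} [Fintype ι] {w f : ι → ℝ} {M : ℝ}
    (hw0 : ∀ i, 0 ≤ w i) (hw1 : ∑ i, w i = 1) (hf : ∀ i, f i ≤ M) :
    ∑ i, w i * f i ≤ M :=
  calc ∑ i, w i * f i ≤ ∑ i, w i * M :=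
        sum_le_sum fun i _ => mul_le_mul_of_nonneg_left (hf i) (hw0 i)
    _ = M := by rw [← sum_mul, hw1, one_mul]

section SoftMDP

variable {S U : Type*} [Fintype U]

noncomputable def softValue (α : ℝ) (π Q : S → U → ℝ) (s : S) : ℝ :=
  ∑ u, π s u * (Q s u - α * log (π s u))

noncomputable def boltzmann (α : ℝ) (Q : S → U → ℝ) (s : S) (u : U) : ℝ :=
  exp (Q s u / α) / ∑ u', exp (Q s u' / α)

lemma softValue_sub_softValue (α : ℝ) (π Q Q' : S → U → ℝ) (s : S) :
    softValue α π Q s - softValue α π Q' s = ∑ u, π s u * (Q s u - Q' s u) := by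
  rw [softValue, softValue, ← sum_sub_distrib]
  exact sum_congr rfl fun u _ => by ring

section Boltzmann

variable [Nonempty U] (α : ℝ) (Q : S → U → ℝ) (s : S)

lemma sum_exp_div_pos : 0 < ∑ u, exp (Q s u / α) :=
  sum_pos (fun _ _ => exp_pos _) univ_nonempty

lemma boltzmann_pos (u : U) : 0 < boltzmann α Q s u :=
  div_pos (exp_pos _) (sum_exp_div_pos α Q s)

lemma sum_boltzmann : ∑ u, boltzmann α Q s u = 1 := by
  simp only [boltzmann, ← sum_div, div_self (sum_exp_div_pos α Q s).ne']

lemma log_boltzmann (u : U) :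
    log (boltzmann α Q s u) = Q s u / α - log (∑ u', exp (Q s u' / α)) := by
  rw [boltzmann, log_div (exp_ne_zero _) (sum_exp_div_pos α Q s).ne', log_exp]

variable {α}

lemma softValue_eq_log_partition_sub {p : S → U → ℝ} (hα : α ≠ 0) (hp : ∑ u, p s u = 1) :
    softValue α p Q s = α * log (∑ u, exp (Q s u / α)) +
      α * (∑ u, p s u * log (boltzmann α Q s u) - ∑ u, p s u * log (p s u)) := by
  set logZ := log (∑ u, exp (Q s u / α))
  have hQ : ∀ u, Q s u = α * logZ + α * log (boltzmann α Q s u) := fun u => by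
    rw [log_boltzmann]
    field_simp
    ring
  calc softValue α p Q s
      = ∑ u, (α * logZ * p s u +
          α * (p s u * log (boltzmann α Q s u) - p s u * log (p s u))) :=
        sum_congr rfl fun u _ => by rw [hQ u]; ring
    _ = _ := by rw [sum_add_distrib, ← mul_sum, ← mul_sum, sum_sub_distrib, hp, mul_one]

lemma softValue_boltzmann (hα : α ≠ 0) :
    softValue α (boltzmann α Q) Q s = α * log (∑ u, exp (Q s u / α)) := by
  rw [softValue_eq_log_partition_sub Q s hα (sum_boltzmann α Q s), sub_self, mul_zero, add_zero]

lemma softValue_le_softValue_boltzmann (hα : 0 < α) {p : S → U → ℝ}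
    (hp0 : ∀ u, 0 ≤ p s u) (hp1 : ∑ u, p s u = 1) :
    softValue α p Q s ≤ softValue α (boltzmann α Q) Q s := by
  have hgibbs := sum_mul_log_le_sum_mul_log hp0 (boltzmann_pos α Q s)
    (hp1.trans (sum_boltzmann α Q s).symm)
  rw [softValue_boltzmann Q s hα.ne', softValue_eq_log_partition_sub Q s hα.ne' hp1]
  nlinarith

end Boltzmann

variable [Fintype S] {P : S → U → S → ℝ} {r : S → U → ℝ} {γ α : ℝ}

lemma softBellman_apply (π Q : S → U → ℝ) (s : S) (u : U) :
    softBellman P r γ α π Q s u = r s u + γ * ∑ s', P s u s' * softValue α π Q s' :=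
  rfl

lemma softBellman_le_softBellman_of_softValue_le (hP0 : ∀ s u s', 0 ≤ P s u s') (hγ0 : 0 ≤ γ)
    {π π' Q : S → U → ℝ} (h : ∀ s, softValue α π Q s ≤ softValue α π' Q s) :
    softBellman P r γ α π Q ≤ softBellman P r γ α π' Q := by
  intro s u
  simp only [softBellman_apply]
  gcongr with s' _
  · exact hP0 s u s'
  · exact h s'

lemma softBellman_sub_softBellman_le (hP0 : ∀ s u s', 0 ≤ P s u s')
    (hP1 : ∀ s u, ∑ s', P s u s' = 1) (hγ0 : 0 ≤ γ) {π Q Q' : S → U → ℝ}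
    (hπ0 : ∀ s u, 0 ≤ π s u) (hπ1 : ∀ s, ∑ u, π s u = 1) {M : ℝ}
    (hM : ∀ s u, Q s u - Q' s u ≤ M) (s : S) (u : U) :
    softBellman P r γ α π Q s u - softBellman P r γ α π Q' s u ≤ γ * M := by
  have hV : ∀ s', softValue α π Q s' - softValue α π Q' s' ≤ M := fun s' => by
    rw [softValue_sub_softValue]
    exact sum_mul_le_of_le (hπ0 s') (hπ1 s') (hM s')
  rw [softBellman_apply, softBellman_apply, add_sub_add_left_eq_sub, ← mul_sub,
    ← sum_sub_distrib]
  simp only [← mul_sub]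
  exact mul_le_mul_of_nonneg_left (sum_mul_le_of_le (hP0 s u) (hP1 s u) hV) hγ0

theorem le_of_le_softBellman (hP0 : ∀ s u s', 0 ≤ P s u s')
    (hP1 : ∀ s u, ∑ s', P s u s' = 1) (hγ0 : 0 ≤ γ) (hγ1 : γ < 1) {π Q Q' : S → U → ℝ}
    (hπ0 : ∀ s u, 0 ≤ π s u) (hπ1 : ∀ s, ∑ u, π s u = 1)
    (hQ : Q ≤ softBellman P r γ α π Q) (hQ' : Q' = softBellman P r γ α π Q') : Q ≤ Q' := by
  intro s u
  have : Nonempty (S × U) := ⟨(s, u)⟩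
  obtain ⟨⟨s₀, u₀⟩, hmax⟩ := Finite.exists_max fun x : S × U => Q x.1 x.2 - Q' x.1 x.2
  have hM : Q s₀ u₀ - Q' s₀ u₀ ≤ γ * (Q s₀ u₀ - Q' s₀ u₀) :=
    calc Q s₀ u₀ - Q' s₀ u₀
        ≤ softBellman P r γ α π Q s₀ u₀ - softBellman P r γ α π Q' s₀ u₀ := by
          rw [← congrFun₂ hQ' s₀ u₀]
          exact sub_le_sub_right (hQ s₀ u₀) _
      _ ≤ γ * (Q s₀ u₀ - Q' s₀ u₀) :=
          softBellman_sub_softBellman_le hP0 hP1 hγ0 hπ0 hπ1 (fun s u => hmax (s, u)) s₀ u₀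
  have hM0 : Q s₀ u₀ - Q' s₀ u₀ ≤ 0 := by nlinarith
  linarith [hmax (s, u)]

end SoftMDP

theorem soft_policy_improvement_general
    {S U : Type*} [Fintype S] [Fintype U]
    (P : S → U → S → ℝ) (hP0 : ∀ s u s', 0 ≤ P s u s')
    (hP1 : ∀ s u, ∑ s', P s u s' = 1)
    (r : S → U → ℝ) (γ α : ℝ) (hγ0 : 0 ≤ γ) (hγ1 : γ < 1) (hα : 0 < α)
    (π : S → U → ℝ) (hπ0 : ∀ s u, 0 ≤ π s u) (hπ1 : ∀ s, ∑ u, π s u = 1)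
    (Q₁ : S → U → ℝ) (hQ₁ : Q₁ = softBellman P r γ α π Q₁)
    (π' : S → U → ℝ)
    (hπ' : ∀ s u, π' s u = Real.exp (Q₁ s u / α) / ∑ u', Real.exp (Q₁ s u' / α))
    (Q₂ : S → U → ℝ) (hQ₂ : Q₂ = softBellman P r γ α π' Q₂) :
    ∀ s u, Q₁ s u ≤ Q₂ s u := by
  intro s u
  have : Nonempty U := ⟨u⟩
  obtain rfl : π' = boltzmann α Q₁ := funext₂ hπ'
  have himprove : Q₁ ≤ softBellman P r γ α (boltzmann α Q₁) Q₁ :=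
    hQ₁.trans_le <| softBellman_le_softBellman_of_softValue_le hP0 hγ0 fun s =>
      softValue_le_softValue_boltzmann Q₁ s hα (hπ0 s) (hπ1 s)
  exact le_of_le_softBellman hP0 hP1 hγ0 hγ1 (fun s u => (boltzmann_pos α Q₁ s u).le)
    (sum_boltzmann α Q₁) himprove hQ₂ s u

theorem soft_policy_improvement
    {S U : Type*} [Fintype S] [Fintype U] [Nonempty S] [Nonempty U]
    (P : S → U → S → ℝ) (hP0 : ∀ s u s', 0 ≤ P s u s')
    (hP1 : ∀ s u, ∑ s', P s u s' = 1)
    (r : S → U → ℝ) (γ α : ℝ) (hγ0 : 0 ≤ γ) (hγ1 : γ < 1) (hα : 0 < α)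
    (π : S → U → ℝ) (hπ0 : ∀ s u, 0 ≤ π s u) (hπ1 : ∀ s, ∑ u, π s u = 1)
    (Q₁ : S → U → ℝ) (hQ₁ : Q₁ = softBellman P r γ α π Q₁)
    (π' : S → U → ℝ)
    (hπ' : ∀ s u, π' s u = Real.exp (Q₁ s u / α) / ∑ u', Real.exp (Q₁ s u' / α))
    (Q₂ : S → U → ℝ) (hQ₂ : Q₂ = softBellman P r γ α π' Q₂) :
    ∀ s u, Q₁ s u ≤ Q₂ s u :=
  soft_policy_improvement_general P hP0 hP1 r γ α hγ0 hγ1 hα π hπ0 hπ1 Q₁ hQ₁ π' hπ' Q₂ hQ₂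
end

section
/- Let S and U be nonempty finite types, let P be a transition kernel on S with actions U, let r be a reward function, let 0 ≤ γ < 1 and α > 0. If Q* satisfies Q* = Γ* Q* and, for some policy π, Qπ satisfies Qπ = Γ_π Qπ, then Qπ s u ≤ Q* s u for all s ∈ S and u ∈ U. (The optimal soft Q-function dominates the soft Q-function of every policy; part of the conclusion of the paper's Theorem 6.3.) -/
/-- Gibbs variational inequality. -/
lemma gibbs_aux {U : Type*} [Fintype U] [Nonempty U] (p : U → ℝ)
    (hp0 : ∀ u, 0 ≤ p u) (hp1 : ∑ u, p u = 1) (q : U → ℝ) :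
    ∑ u, p u * (q u - Real.log (p u)) ≤ Real.log (∑ u, Real.exp (q u)) := by
  have hZ : 0 < ∑ u, Real.exp (q u) :=
    Finset.sum_pos (fun u _ => Real.exp_pos _) Finset.univ_nonempty
  set Z := ∑ u, Real.exp (q u) with hZdef
  have key : ∀ u, p u * (q u - Real.log (p u)) - p u * Real.log Z
      ≤ Real.exp (q u) / Z - p u := by
    intro u
    rcases eq_or_lt_of_le (hp0 u) with h | h
    · rw [← h]
      simp only [zero_mul, sub_zero, zero_sub, neg_zero, sub_self]
      positivity
    · have hx : 0 < Real.exp (q u) / (p u * Z) := by positivity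
      have hlog := Real.log_le_sub_one_of_pos hx
      have hleq : Real.log (Real.exp (q u) / (p u * Z))
          = q u - Real.log (p u) - Real.log Z := by
        rw [Real.log_div (Real.exp_ne_zero _) (by positivity), Real.log_exp,
          Real.log_mul (ne_of_gt h) (ne_of_gt hZ)]
        ring
      have h2 : p u * (q u - Real.log (p u) - Real.log Z)
          ≤ p u * (Real.exp (q u) / (p u * Z) - 1) := by
        apply mul_le_mul_of_nonneg_left _ (le_of_lt h)
        rw [← hleq]; exact hlog
      have h3 : p u * (Real.exp (q u) / (p u * Z) - 1)
          = Real.exp (q u) / Z - p u := by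
        field_simp
      calc p u * (q u - Real.log (p u)) - p u * Real.log Z
          = p u * (q u - Real.log (p u) - Real.log Z) := by ring
        _ ≤ p u * (Real.exp (q u) / (p u * Z) - 1) := h2
        _ = Real.exp (q u) / Z - p u := h3
  have hsum := Finset.sum_le_sum (fun u (_ : u ∈ Finset.univ) => key u)
  rw [Finset.sum_sub_distrib, Finset.sum_sub_distrib, ← Finset.sum_mul,
    ← Finset.sum_div, hp1] at hsum
  have hZZ : (Z / Z : ℝ) = 1 := div_self (ne_of_gt hZ)
  linarith

theorem optimal_soft_Q_dominates
    {S U : Type*} [Fintype S] [Fintype U] [Nonempty S] [Nonempty U]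
    (P : S → U → S → ℝ) (hP0 : ∀ s u s', 0 ≤ P s u s')
    (hP1 : ∀ s u, ∑ s', P s u s' = 1)
    (r : S → U → ℝ) (γ α : ℝ) (hγ0 : 0 ≤ γ) (hγ1 : γ < 1) (hα : 0 < α)
    (π : S → U → ℝ) (hπ0 : ∀ s u, 0 ≤ π s u) (hπ1 : ∀ s, ∑ u, π s u = 1)
    (Qstar : S → U → ℝ) (hQstar : Qstar = softBellmanOpt P r γ α Qstar)
    (Qπ : S → U → ℝ) (hQπ : Qπ = softBellman P r γ α π Qπ) :
    ∀ s u, Qπ s u ≤ Qstar s u := by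
  -- maximal gap
  obtain ⟨p0, -, hp0max⟩ := Finset.exists_max_image (Finset.univ : Finset (S × U))
    (fun p => Qπ p.1 p.2 - Qstar p.1 p.2) Finset.univ_nonempty
  set M : ℝ := Qπ p0.1 p0.2 - Qstar p0.1 p0.2 with hM
  have hle : ∀ s u, Qπ s u - Qstar s u ≤ M := fun s u =>
    hp0max (s, u) (Finset.mem_univ _)
  -- key per-state estimate
  have key : ∀ s' : S,
      ∑ u', π s' u' * (Qπ s' u' - α * Real.log (π s' u'))
      ≤ α * Real.log (∑ u', Real.exp (Qstar s' u' / α)) + M := by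
    intro s'
    have step1 : ∑ u', π s' u' * (Qπ s' u' - α * Real.log (π s' u'))
        ≤ ∑ u', π s' u' * (Qstar s' u' + M - α * Real.log (π s' u')) := by
      apply Finset.sum_le_sum
      intro u _
      apply mul_le_mul_of_nonneg_left _ (hπ0 s' u)
      have := hle s' u
      linarith
    have step2 : ∑ u', π s' u' * (Qstar s' u' + M - α * Real.log (π s' u'))
        = (∑ u', π s' u' * (Qstar s' u' - α * Real.log (π s' u'))) + M := by
      have h : ∀ u' : U, π s' u' * (Qstar s' u' + M - α * Real.log (π s' u'))
          = π s' u' * (Qstar s' u' - α * Real.log (π s' u')) + π s' u' * M :=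
        fun u => by ring
      have hm : (∑ u' : U, π s' u' * M) = M := by
        rw [← Finset.sum_mul, hπ1, one_mul]
      simp_rw [h, Finset.sum_add_distrib]
      rw [hm]
    have step3 : ∑ u', π s' u' * (Qstar s' u' - α * Real.log (π s' u'))
        ≤ α * Real.log (∑ u', Real.exp (Qstar s' u' / α)) := by
      have hg := gibbs_aux (π s') (hπ0 s') (hπ1 s') (fun u => Qstar s' u / α)
      have h1 : ∀ u' : U, π s' u' * (Qstar s' u' - α * Real.log (π s' u'))
          = α * (π s' u' * (Qstar s' u' / α - Real.log (π s' u'))) := by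
        intro u; field_simp
      simp_rw [h1, ← Finset.mul_sum]
      exact mul_le_mul_of_nonneg_left hg (le_of_lt hα)
    linarith
  -- bound M ≤ γ * M
  have e1 := congrFun (congrFun hQπ p0.1) p0.2
  have e2 := congrFun (congrFun hQstar p0.1) p0.2
  simp only [softBellman] at e1
  simp only [softBellmanOpt] at e2
  have hbound : ∑ s', P p0.1 p0.2 s' *
        ∑ u', π s' u' * (Qπ s' u' - α * Real.log (π s' u'))
      ≤ (∑ s', P p0.1 p0.2 s' *
        (α * Real.log (∑ u', Real.exp (Qstar s' u' / α)))) + M := by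
    have h : ∑ s', P p0.1 p0.2 s' *
          ∑ u', π s' u' * (Qπ s' u' - α * Real.log (π s' u'))
        ≤ ∑ s', P p0.1 p0.2 s' *
          (α * Real.log (∑ u', Real.exp (Qstar s' u' / α)) + M) :=
      Finset.sum_le_sum (fun s' _ =>
        mul_le_mul_of_nonneg_left (key s') (hP0 _ _ _))
    have h2 : ∑ s', P p0.1 p0.2 s' *
          (α * Real.log (∑ u', Real.exp (Qstar s' u' / α)) + M)
        = (∑ s', P p0.1 p0.2 s' *
          (α * Real.log (∑ u', Real.exp (Qstar s' u' / α)))) + M := by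
      simp_rw [mul_add, Finset.sum_add_distrib, ← Finset.sum_mul, hP1, one_mul]
    linarith
  have hMγ : M ≤ γ * M := by
    have : Qπ p0.1 p0.2 ≤ Qstar p0.1 p0.2 + γ * M := by
      rw [e1, e2]
      have := mul_le_mul_of_nonneg_left hbound hγ0
      linarith [this]
    linarith [this]
  have hM0 : M ≤ 0 := by nlinarith
  intro s u
  have := hle s u
  linarith
end
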